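/- arXiv:2404.19672 — 4 statements merged into one kernel-verified Lean document; each statement's English description precedes it below -/
import Mathlib

section
/- For m ∈ ℝ and σ, η ≥ 0, the 1-Wasserstein distance between the Gaussian measures N(m, σ²) and N(m, η²) on ℝ equals √(2/π) · |σ − η|. -/
open MeasureTheory ProbabilityTheory

/-! The synchronous coupling `(m + σZ, m + ηZ)` has cost `E|(σ - η)Z| = √(2/π)|σ - η|`.
Conversely, `x ↦ |x - m|` is 1-Lipschitz, so for every coupling `γ` the cost is at least
`|E|X - m| - E|Y - m||`, and these first absolute moments are `σ√(2/π)` and `η√(2/π)`. -/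

/-- The 1-Wasserstein distance between two probability measures on ℝ,
defined as the infimum over couplings of the expected absolute difference. -/
noncomputable def wasserstein1 (μ ν : Measure ℝ) : ℝ :=
  ⨅ π : {π : Measure (ℝ × ℝ) //
      IsProbabilityMeasure π ∧ π.map Prod.fst = μ ∧ π.map Prod.snd = ν},
    ∫ p, |p.1 - p.2| ∂(π : Measure (ℝ × ℝ))

open Real Set Filter Topology

lemma integral_Ioi_mul_exp_neg_mul_sq {b : ℝ} (hb : 0 < b) :
    ∫ x in Ioi 0, x * exp (-b * x ^ 2) = (2 * b)⁻¹ := by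
  have hderiv : ∀ x : ℝ, HasDerivAt (fun x => -(2 * b)⁻¹ * exp (-b * x ^ 2))
      (x * exp (-b * x ^ 2)) x := fun x => by
    refine ((((hasDerivAt_pow 2 x).const_mul (-b)).exp).const_mul (-(2 * b)⁻¹)).congr_deriv ?_
    field_simp
    ring
  have hlim : Tendsto (fun x : ℝ => -(2 * b)⁻¹ * exp (-b * x ^ 2)) atTop (𝓝 0) := by
    have : Tendsto (fun x : ℝ => -b * x ^ 2) atTop atBot :=
      (tendsto_pow_atTop two_ne_zero).const_mul_atTop_of_neg (neg_neg_of_pos hb)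
    simpa using (tendsto_exp_atBot.comp this).const_mul (-(2 * b)⁻¹)
  rw [integral_Ioi_of_hasDerivAt_of_tendsto' (fun x _ => hderiv x)
    (integrable_mul_exp_neg_mul_sq hb).integrableOn hlim]
  simp

lemma integral_abs_mul_exp_neg_mul_sq {b : ℝ} (hb : 0 < b) :
    ∫ x, |x| * exp (-b * x ^ 2) = b⁻¹ := by
  have h := integral_comp_abs (f := fun x => x * exp (-b * x ^ 2))
  simp only [sq_abs] at h
  rw [h, integral_Ioi_mul_exp_neg_mul_sq hb]
  field_simp

lemma integral_abs_gaussianReal_zero_one : ∫ x, |x| ∂gaussianReal 0 1 = √(2 / π) := by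
  have hpdf : ∀ x, gaussianPDFReal 0 1 x = (√(2 * π))⁻¹ * exp (-2⁻¹ * x ^ 2) := fun x => by
    simp only [gaussianPDFReal_def, NNReal.coe_one, mul_one, sub_zero]
    ring_nf
  simp only [integral_gaussianReal_eq_integral_smul one_ne_zero, hpdf, smul_eq_mul, mul_assoc]
  rw [integral_const_mul]
  simp only [mul_comm (exp _), integral_abs_mul_exp_neg_mul_sq (by norm_num : (0:ℝ) < 2⁻¹)]
  rw [sqrt_div (by norm_num), sqrt_mul (by norm_num)]
  have h2 : √2 * √2 = 2 := mul_self_sqrt (by norm_num)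
  have : 0 < √π := sqrt_pos.mpr pi_pos
  field_simp
  linarith

lemma gaussianReal_zero_one_map_const_add_mul (m c : ℝ) :
    (gaussianReal 0 1).map (fun z => m + c * z) = gaussianReal m (c ^ 2).toNNReal := by
  have hcomp : (fun z => m + c * z) = (fun y => m + y) ∘ (fun z => c * z) := rfl
  rw [hcomp, ← Measure.map_map (measurable_const_add m) (measurable_const_mul c),
    gaussianReal_map_const_mul, gaussianReal_map_const_add]
  congr 1
  · ring
  · ext; simp [sq_nonneg]

lemma integral_abs_sub_gaussianReal (m c : ℝ) :
    ∫ x, |x - m| ∂gaussianReal m (c ^ 2).toNNReal = |c| * √(2 / π) := by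
  rw [← gaussianReal_zero_one_map_const_add_mul, integral_map (by fun_prop) (by fun_prop)]
  simp only [add_sub_cancel_left, abs_mul]
  rw [integral_const_mul, integral_abs_gaussianReal_zero_one]

lemma integrable_fst_sub_snd {γ : Measure (ℝ × ℝ)}
    (h₁ : Integrable id (γ.map Prod.fst)) (h₂ : Integrable id (γ.map Prod.snd)) :
    Integrable (fun p => p.1 - p.2) γ := by
  rw [integrable_map_measure (by fun_prop) (by fun_prop)] at h₁ h₂
  exact h₁.sub h₂

lemma abs_integral_map_fst_sub_integral_map_snd_le {γ : Measure (ℝ × ℝ)} {f : ℝ → ℝ}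
    (hf : LipschitzWith 1 f) (h₁ : Integrable f (γ.map Prod.fst))
    (h₂ : Integrable f (γ.map Prod.snd)) (hγ : Integrable (fun p => p.1 - p.2) γ) :
    |∫ x, f x ∂γ.map Prod.fst - ∫ x, f x ∂γ.map Prod.snd| ≤ ∫ p, |p.1 - p.2| ∂γ := by
  have hfm : Measurable f := hf.continuous.measurable
  replace h₁ : Integrable (fun p => f p.1) γ :=
    (integrable_map_measure hfm.aestronglyMeasurable (by fun_prop)).mp h₁
  replace h₂ : Integrable (fun p => f p.2) γ :=
    (integrable_map_measure hfm.aestronglyMeasurable (by fun_prop)).mp h₂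
  rw [integral_map (by fun_prop) hfm.aestronglyMeasurable,
    integral_map (by fun_prop) hfm.aestronglyMeasurable, ← integral_sub h₁ h₂]
  refine abs_integral_le_integral_abs.trans (integral_mono (h₁.sub h₂).abs hγ.abs fun p => ?_)
  simpa [Real.dist_eq] using hf.dist_le_mul p.1 p.2

lemma wasserstein1_eq_of_optimal_coupling {μ ν : Measure ℝ} {c : ℝ} (γ₀ : Measure (ℝ × ℝ))
    [IsProbabilityMeasure γ₀] (h₁ : γ₀.map Prod.fst = μ) (h₂ : γ₀.map Prod.snd = ν)
    (hγ₀ : ∫ p, |p.1 - p.2| ∂γ₀ = c)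
    (hle : ∀ γ : Measure (ℝ × ℝ), IsProbabilityMeasure γ → γ.map Prod.fst = μ →
      γ.map Prod.snd = ν → c ≤ ∫ p, |p.1 - p.2| ∂γ) :
    wasserstein1 μ ν = c := by
  have hbdd : ∀ γ : {γ : Measure (ℝ × ℝ) //
      IsProbabilityMeasure γ ∧ γ.map Prod.fst = μ ∧ γ.map Prod.snd = ν},
      c ≤ ∫ p, |p.1 - p.2| ∂(γ : Measure (ℝ × ℝ)) :=
    fun ⟨γ, hγ, h₁, h₂⟩ => hle γ hγ h₁ h₂
  have : Nonempty {γ : Measure (ℝ × ℝ) //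
      IsProbabilityMeasure γ ∧ γ.map Prod.fst = μ ∧ γ.map Prod.snd = ν} :=
    ⟨⟨γ₀, inferInstance, h₁, h₂⟩⟩
  refine le_antisymm ?_ (le_ciInf hbdd)
  exact ciInf_le_of_le ⟨c, Set.forall_mem_range.mpr hbdd⟩ ⟨γ₀, inferInstance, h₁, h₂⟩ hγ₀.le

lemma integral_abs_fst_sub_snd_map_const_add_mul (m σ η : ℝ) :
    ∫ p, |p.1 - p.2| ∂(gaussianReal 0 1).map (fun z => (m + σ * z, m + η * z))
      = √(2 / π) * |σ - η| := by
  rw [integral_map (by fun_prop) (by fun_prop)]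
  simp only [add_sub_add_left_eq_sub, ← sub_mul, abs_mul]
  rw [integral_const_mul, integral_abs_gaussianReal_zero_one, mul_comm]

lemma sqrt_two_div_pi_mul_abs_sub_le_integral_abs_sub {γ : Measure (ℝ × ℝ)} {m σ η : ℝ}
    (hσ : 0 ≤ σ) (hη : 0 ≤ η) (h₁ : γ.map Prod.fst = gaussianReal m (σ ^ 2).toNNReal)
    (h₂ : γ.map Prod.snd = gaussianReal m (η ^ 2).toNNReal) :
    √(2 / π) * |σ - η| ≤ ∫ p, |p.1 - p.2| ∂γ := by
  have hlip : LipschitzWith 1 fun x : ℝ => |x - m| :=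
    LipschitzWith.of_dist_le_mul fun x y => by
      simpa [Real.dist_eq] using abs_abs_sub_abs_le_abs_sub (x - m) (y - m)
  have hid : ∀ c : ℝ, Integrable id (gaussianReal m (c ^ 2).toNNReal) :=
    fun c => (memLp_id_gaussianReal 1).integrable le_rfl
  have key := abs_integral_map_fst_sub_integral_map_snd_le hlip
    (h₁ ▸ ((hid σ).sub (integrable_const m)).abs) (h₂ ▸ ((hid η).sub (integrable_const m)).abs)
    (integrable_fst_sub_snd (h₁ ▸ hid σ) (h₂ ▸ hid η))
  rwa [h₁, h₂, integral_abs_sub_gaussianReal, integral_abs_sub_gaussianReal, abs_of_nonneg hσ,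
    abs_of_nonneg hη, ← sub_mul, abs_mul, abs_of_nonneg (sqrt_nonneg _), mul_comm] at key

theorem wasserstein1_gaussian (m σ η : ℝ) (hσ : 0 ≤ σ) (hη : 0 ≤ η) :
    wasserstein1 (gaussianReal m (Real.toNNReal (σ ^ 2)))
      (gaussianReal m (Real.toNNReal (η ^ 2)))
      = Real.sqrt (2 / Real.pi) * |σ - η| := by
  have : IsProbabilityMeasure ((gaussianReal 0 1).map fun z => (m + σ * z, m + η * z)) :=
    Measure.isProbabilityMeasure_map (by fun_prop)
  refine wasserstein1_eq_of_optimal_coupling ((gaussianReal 0 1).map fun z => (m + σ * z, m + η * z))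
    ?_ ?_ (integral_abs_fst_sub_snd_map_const_add_mul m σ η)
    fun γ _ h₁ h₂ => sqrt_two_div_pi_mul_abs_sub_le_integral_abs_sub hσ hη h₁ h₂
  · rw [Measure.map_map measurable_fst (by fun_prop)]
    exact gaussianReal_zero_one_map_const_add_mul m σ
  · rw [Measure.map_map measurable_snd (by fun_prop)]
    exact gaussianReal_zero_one_map_const_add_mul m η
end

section
/- The function σ(t,x) = √(2/(1−t)) · x(1−x) satisfies the nonlinear PDE ∂_t(σ^{1/2}) + (1/2)σ² ∂²ₓₓ(σ^{1/2}) = 0 for all (t,x) ∈ [0,1) × (0,1). -/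
/-!
Since `√(ab) = √a √b` for `a ≥ 0`, and `u ^ (1/2) = √u` for every real `u`, the function
`σ^{1/2}` separates as `A(t) g(x)` with `A = (2/(1-t))^{1/4}` and `g = √(x(1-x))`.
Then `A'/A = 1/(4(1-t))` and `g³ g'' = (2hh'' - h'²)/4 = -1/4` for `h = x(1-x)`, while
`σ² = (2/(1-t)) g⁴`, so the two terms of the equation are `± A g / (4(1-t))`.
-/

noncomputable def sigmaHalf (t x : ℝ) : ℝ := Real.sqrt (2 / (1 - t)) * (x * (1 - x))

open Filter Topology

lemma HasDerivAt.sqrt_sqrt {f : ℝ → ℝ} {f' t : ℝ} (hf : HasDerivAt f f' t) (ht : 0 < f t) :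
    HasDerivAt (fun s => √(√(f s))) (√(√(f t)) * f' / (4 * f t)) t := by
  have hsqrt : 0 < √(f t) := Real.sqrt_pos.mpr ht
  refine ((hf.sqrt ht.ne').sqrt hsqrt.ne').congr_deriv ?_
  have hsq : √(f t) ^ 2 = f t := Real.sq_sqrt ht.le
  have hsqsq : √(√(f t)) ^ 2 = √(f t) := Real.sq_sqrt hsqrt.le
  field_simp
  rw [hsqsq]
  linear_combination (-4 * f') * hsq

lemma hasDerivAt_div_one_sub (c : ℝ) {t : ℝ} (ht : t ≠ 1) :
    HasDerivAt (fun s => c / (1 - s)) (c / (1 - t) ^ 2) t := by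
  have hne : 1 - t ≠ 0 := sub_ne_zero.mpr (Ne.symm ht)
  simpa [div_eq_mul_inv] using (((hasDerivAt_id t).const_sub 1).inv hne).const_mul c

lemma hasDerivAt_deriv_sqrt {h h' : ℝ → ℝ} {h'' x : ℝ}
    (hh : ∀ᶠ y in 𝓝 x, HasDerivAt h (h' y) y) (hh' : HasDerivAt h' h'' x) (hx : 0 < h x) :
    HasDerivAt (deriv fun z => √(h z))
      ((2 * h x * h'' - h' x ^ 2) / (4 * √(h x) ^ 3)) x := by
  have hpos : ∀ᶠ y in 𝓝 x, 0 < h y :=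
    hh.self_of_nhds.continuousAt.eventually (lt_mem_nhds hx)
  have hderiv : deriv (fun z => √(h z)) =ᶠ[𝓝 x] fun y => h' y / (2 * √(h y)) := by
    filter_upwards [hh, hpos] with y hy hy0
    exact (hy.sqrt hy0.ne').deriv
  have hquot := hh'.div ((hh.self_of_nhds.sqrt hx.ne').const_mul 2) (by positivity)
  refine (hquot.congr_of_eventuallyEq hderiv).congr_deriv ?_
  have hsq : √(h x) ^ 2 = h x := Real.sq_sqrt hx.le
  field_simp
  rw [hsq]
  ring

lemma deriv_deriv_sqrt_mul_one_sub {x : ℝ} (hx : x ∈ Set.Ioo (0 : ℝ) 1) :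
    deriv (deriv fun z => √(z * (1 - z))) x = -1 / (4 * √(x * (1 - x)) ^ 3) := by
  have hh : ∀ y, HasDerivAt (fun z : ℝ => z * (1 - z)) (1 - 2 * y) y := fun y =>
    ((hasDerivAt_id' y).mul ((hasDerivAt_id' y).const_sub 1)).congr_deriv (by ring)
  have hh' : HasDerivAt (fun y : ℝ => 1 - 2 * y) (-2) x := by
    simpa using ((hasDerivAt_id x).const_mul 2).const_sub 1
  have hx0 : 0 < x * (1 - x) := mul_pos hx.1 (sub_pos.mpr hx.2)
  rw [(hasDerivAt_deriv_sqrt (Eventually.of_forall hh) hh' hx0).deriv]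
  congr 1
  ring

lemma sigmaHalf_rpow_half (t x : ℝ) :
    sigmaHalf t x ^ ((1 : ℝ) / 2) = √(√(2 / (1 - t))) * √(x * (1 - x)) := by
  rw [← Real.sqrt_eq_rpow, sigmaHalf, Real.sqrt_mul (Real.sqrt_nonneg _)]

theorem pde_p_half :
    ∀ t ∈ Set.Ico (0 : ℝ) 1, ∀ x ∈ Set.Ioo (0 : ℝ) 1,
      deriv (fun s => sigmaHalf s x ^ ((1 : ℝ) / 2)) t
        + (1 / 2) * (sigmaHalf t x) ^ 2
            * deriv (fun y => deriv (fun z => sigmaHalf t z ^ ((1 : ℝ) / 2)) y) x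
        = 0 := by
  intro t ht x hx
  have ht1 : 0 < 1 - t := sub_pos.mpr ht.2
  have hA := (hasDerivAt_div_one_sub 2 ht.2.ne).sqrt_sqrt (by positivity)
  simp only [sigmaHalf_rpow_half, deriv_mul_const_field', deriv_const_mul_field', hA.deriv]
  rw [deriv_deriv_sqrt_mul_one_sub hx, sigmaHalf]
  have hx0 : 0 < x * (1 - x) := mul_pos hx.1 (sub_pos.mpr hx.2)
  have hS : √(2 / (1 - t)) ^ 2 = 2 / (1 - t) := Real.sq_sqrt (by positivity)
  have hg2 : √(x * (1 - x)) ^ 2 = x * (1 - x) := Real.sq_sqrt hx0.le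
  rw [mul_pow, hS]
  field_simp
  linear_combination √(√(2 / (1 - t))) * (√(x * (1 - x)) ^ 2 + x * (1 - x)) * hg2
end

section
/- The function σ(t,x) = sin(πx)/(π√(1−t)) satisfies ∂_t(log σ) + (1/2)σ² ∂²ₓₓ(log σ) = 0 for all (t,x) ∈ [0,1) × (0,1). -/
/-! Since `σ` separates as `sin (π x) · (π √(1 - t))⁻¹`, its logarithm is
`log sin (π x) - log π - ½ log (1 - t)`. Hence `∂ₜ log σ = 1 / (2 (1 - t))`, while
`∂ₓₓ log σ = (π cot (π x))' = -π² / sin² (π x)`, and multiplying the latter by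
`½ σ² = sin² (π x) / (2 π² (1 - t))` gives exactly `-1 / (2 (1 - t))`. -/

noncomputable def sigmaAldous (t x : ℝ) : ℝ :=
  Real.sin (Real.pi * x) / (Real.pi * Real.sqrt (1 - t))

open Real Set Filter

section LogSin

variable {a x : ℝ}

lemma hasDerivAt_log_sin_mul (hx : sin (a * x) ≠ 0) :
    HasDerivAt (fun y => log (sin (a * y))) (a * cos (a * x) / sin (a * x)) x := by
  have hsin : HasDerivAt (fun y => sin (a * y)) (cos (a * x) * a) x :=
    ((hasDerivAt_id x).const_mul a).sin.congr_deriv (by simp)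
  convert hsin.log hx using 1
  ring

lemma hasDerivAt_mul_cos_div_sin_mul (hx : sin (a * x) ≠ 0) :
    HasDerivAt (fun y => a * cos (a * y) / sin (a * y)) (-a ^ 2 / sin (a * x) ^ 2) x := by
  have hlin : HasDerivAt (fun y => a * y) a x := by
    simpa using (hasDerivAt_id x).const_mul a
  refine ((hlin.cos.const_mul a).div hlin.sin hx).congr_deriv ?_
  field_simp
  linear_combination (-a ^ 2) * sin_sq_add_cos_sq (a * x)

end LogSin

lemma sin_pi_mul_pos {x : ℝ} (hx : x ∈ Ioo (0 : ℝ) 1) : 0 < sin (π * x) :=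
  sin_pos_of_pos_of_lt_pi (mul_pos pi_pos hx.1) (by nlinarith [pi_pos, hx.2])

section SigmaAldous

variable {t x : ℝ}

lemma log_sigmaAldous (ht : t < 1) (hx : 0 < sin (π * x)) :
    log (sigmaAldous t x) = log (sin (π * x)) - log π - log (1 - t) / 2 := by
  have h1t : 0 < 1 - t := by linarith
  rw [sigmaAldous, log_div hx.ne' (by positivity),
    log_mul pi_ne_zero (sqrt_pos.mpr h1t).ne', log_sqrt h1t.le]
  ring

lemma sigmaAldous_sq (ht : t ≤ 1) :
    sigmaAldous t x ^ 2 = sin (π * x) ^ 2 / (π ^ 2 * (1 - t)) := by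
  rw [sigmaAldous, div_pow, mul_pow, sq_sqrt (by linarith)]

lemma deriv_log_sigmaAldous_time (ht : t < 1) (hx : 0 < sin (π * x)) :
    deriv (fun s => log (sigmaAldous s x)) t = 1 / (2 * (1 - t)) := by
  have heq : (fun s => log (sigmaAldous s x)) =ᶠ[nhds t]
      fun s => log (sin (π * x)) - log π - log (1 - s) / 2 := by
    filter_upwards [Iio_mem_nhds ht] with s hs
    exact log_sigmaAldous hs hx
  have hlog : HasDerivAt (fun s => log (1 - s)) (-1 / (1 - t)) t :=
    ((hasDerivAt_id t).const_sub 1).log (by simp only [id]; linarith)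
  rw [heq.deriv_eq, ((hlog.div_const 2).const_sub _).deriv]
  field_simp

lemma deriv_log_sigmaAldous_space (ht : t < 1) (hx : x ∈ Ioo (0 : ℝ) 1) :
    deriv (fun z => log (sigmaAldous t z)) x = π * cos (π * x) / sin (π * x) := by
  have heq : (fun z => log (sigmaAldous t z)) =ᶠ[nhds x]
      fun z => log (sin (π * z)) - log π - log (1 - t) / 2 := by
    filter_upwards [Ioo_mem_nhds hx.1 hx.2] with z hz
    exact log_sigmaAldous ht (sin_pi_mul_pos hz)
  rw [heq.deriv_eq,
    (((hasDerivAt_log_sin_mul (sin_pi_mul_pos hx).ne').sub_const _).sub_const _).deriv]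

lemma deriv_deriv_log_sigmaAldous_space (ht : t < 1) (hx : x ∈ Ioo (0 : ℝ) 1) :
    deriv (fun y => deriv (fun z => log (sigmaAldous t z)) y) x = -π ^ 2 / sin (π * x) ^ 2 := by
  have heq : (fun y => deriv (fun z => log (sigmaAldous t z)) y) =ᶠ[nhds x]
      fun y => π * cos (π * y) / sin (π * y) := by
    filter_upwards [Ioo_mem_nhds hx.1 hx.2] with y hy
    exact deriv_log_sigmaAldous_space ht hy
  rw [heq.deriv_eq, (hasDerivAt_mul_cos_div_sin_mul (sin_pi_mul_pos hx).ne').deriv]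

end SigmaAldous

theorem pde_aldous :
    ∀ t ∈ Set.Ico (0 : ℝ) 1, ∀ x ∈ Set.Ioo (0 : ℝ) 1,
      deriv (fun s => Real.log (sigmaAldous s x)) t
        + (1 / 2) * (sigmaAldous t x) ^ 2
            * deriv (fun y => deriv (fun z => Real.log (sigmaAldous t z)) y) x
        = 0 := by
  intro t ht x hx
  have hsin := sin_pi_mul_pos hx
  rw [deriv_log_sigmaAldous_time ht.2 hsin, sigmaAldous_sq ht.2.le,
    deriv_deriv_log_sigmaAldous_space ht.2 hx]
  field_simp
  ring
end

section
/- Fix t ≥ 0 and x ∈ ℝ. With f^T(t,x) = √(T/(T−t)) · e^{−x²/(2(T−t))} · e^{−(T²/8)(1/(T−t) − 1/T)} · cosh(xT/(2(T−t))), one has lim_{T→∞} f^T(t,x) = cosh(x/2)·e^{−t/8}. -/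
open Filter Topology

theorem tendsto_div_sub_const_atTop (c : ℝ) :
    Tendsto (fun T : ℝ => T / (T - c)) atTop (𝓝 1) := by
  have hquot : Tendsto (fun T : ℝ => 1 - c / T) atTop (𝓝 1) := by
    simpa using tendsto_const_nhds.sub (tendsto_const_nhds.div_atTop (tendsto_id (α := ℝ)))
  have hinv : Tendsto (fun T : ℝ => (1 - c / T)⁻¹) atTop (𝓝 1) := by
    simpa using hquot.inv₀ one_ne_zero
  refine hinv.congr' ?_
  filter_upwards [eventually_ne_atTop 0] with T hT
  rw [one_sub_div hT, inv_div]

theorem tendsto_sq_mul_inv_sub_inv_atTop (c : ℝ) :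
    Tendsto (fun T : ℝ => T ^ 2 * (1 / (T - c) - 1 / T)) atTop (𝓝 c) := by
  have hlim : Tendsto (fun T : ℝ => c * (T / (T - c))) atTop (𝓝 c) := by
    simpa using (tendsto_div_sub_const_atTop c).const_mul c
  refine hlim.congr' ?_
  filter_upwards [eventually_ne_atTop 0, eventually_ne_atTop c] with T hT hTc
  field_simp [sub_ne_zero.mpr hTc]
  ring

theorem bridge_density_limit_general (t x : ℝ) :
    Tendsto (fun T : ℝ =>
        Real.sqrt (T / (T - t)) * Real.exp (-x ^ 2 / (2 * (T - t)))
          * Real.exp (-(T ^ 2 / 8) * (1 / (T - t) - 1 / T))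
          * Real.cosh (x * T / (2 * (T - t))))
      atTop (nhds (Real.cosh (x / 2) * Real.exp (-t / 8))) := by
  have hratio := tendsto_div_sub_const_atTop t
  have hgap : Tendsto (fun T : ℝ => 2 * (T - t)) atTop atTop :=
    (tendsto_atTop_add_const_right _ (-t) tendsto_id).const_mul_atTop two_pos
  have hsqrt : Tendsto (fun T : ℝ => Real.sqrt (T / (T - t))) atTop (𝓝 1) := by
    simpa using hratio.sqrt
  have hgauss : Tendsto (fun T : ℝ => Real.exp (-x ^ 2 / (2 * (T - t)))) atTop (𝓝 1) := by
    simpa using (tendsto_const_nhds.div_atTop hgap).rexp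
  have hdrift : Tendsto (fun T : ℝ => Real.exp (-(T ^ 2 / 8) * (1 / (T - t) - 1 / T)))
      atTop (𝓝 (Real.exp (-t / 8))) := by
    convert ((tendsto_sq_mul_inv_sub_inv_atTop t).const_mul (-1 / 8)).rexp using 3 <;> ring
  have hcosh : Tendsto (fun T : ℝ => Real.cosh (x * T / (2 * (T - t)))) atTop
      (𝓝 (Real.cosh (x / 2))) := by
    convert (Real.continuous_cosh.tendsto _).comp (hratio.const_mul (x / 2)) using 2
    · simp [mul_div_mul_comm]
    · simp
  simpa [mul_comm] using ((hsqrt.mul hgauss).mul hdrift).mul hcosh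

theorem bridge_density_limit (t x : ℝ) (ht : 0 ≤ t) :
    Tendsto (fun T : ℝ =>
        Real.sqrt (T / (T - t)) * Real.exp (-x ^ 2 / (2 * (T - t)))
          * Real.exp (-(T ^ 2 / 8) * (1 / (T - t) - 1 / T))
          * Real.cosh (x * T / (2 * (T - t))))
      atTop (nhds (Real.cosh (x / 2) * Real.exp (-t / 8))) :=
  bridge_density_limit_general t x
end
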